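/- arXiv:2503.04473 — 2 statements merged into one kernel-verified Lean document; each statement's English description precedes it below -/
import Mathlib

section
/- Let B be a finite set of points (a dense cluster) such that every point of B has its k-nearest neighbors contained in B. Let R_max and R_min be the maximum and minimum reachability distances between points of B, with R_min > 0, and let ε = R_max/R_min − 1. Then for every c ∈ B, the local outlier factor satisfies 1/(1+ε) ≤ LOF_k(c) ≤ 1 + ε. -/
/-- In a dense cluster `B` of benign clients whose `k`-nearest neighbors stay
inside `B`, with all reachability distances between points of `B` lying in
`[Rmin, Rmax]` (`Rmin > 0`) and `ε = Rmax / Rmin − 1`, every `c ∈ B` has local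
outlier factor bounded as `1/(1+ε) ≤ LOF_k(c) ≤ 1+ε`. -/
theorem lof_benign_bounds {D : Type*} [MetricSpace D] [Fintype D]
    (kdist : D → ℝ) (Nk : D → Finset D)
    (reach : D → D → ℝ)
    (hreach : ∀ p q, reach p q = max (kdist q) (dist p q))
    (lrd : D → ℝ)
    (hlrd : ∀ p, lrd p = ((Nk p).card : ℝ) / (∑ q ∈ Nk p, reach p q))
    (LOF : D → ℝ)
    (hLOF : ∀ p, LOF p = (1 / ((Nk p).card : ℝ)) * ∑ q ∈ Nk p, lrd q / lrd p)
    (B : Finset D)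
    (hsub : ∀ c ∈ B, Nk c ⊆ B)
    (hnonempty : ∀ c ∈ B, (Nk c).Nonempty)
    (Rmin Rmax : ℝ) (hRmin : 0 < Rmin)
    (hbound : ∀ p ∈ B, ∀ q ∈ B, Rmin ≤ reach p q ∧ reach p q ≤ Rmax)
    (ε : ℝ) (hε : ε = Rmax / Rmin - 1) :
    ∀ c ∈ B, 1 / (1 + ε) ≤ LOF c ∧ LOF c ≤ 1 + ε := by
  intro c hc
  have hRmax : 0 < Rmax := lt_of_lt_of_le hRmin
    (le_trans (hbound c hc c hc).1 (hbound c hc c hc).2)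
  -- lrd bounds for points of B
  have hlrdb : ∀ p ∈ B, 1 / Rmax ≤ lrd p ∧ lrd p ≤ 1 / Rmin := by
    intro p hp
    have hne := hnonempty p hp
    have hcard : (0:ℝ) < ((Nk p).card : ℝ) := by
      exact_mod_cast Finset.card_pos.mpr hne
    have hsumlo : ((Nk p).card : ℝ) * Rmin ≤ ∑ q ∈ Nk p, reach p q := by
      calc ((Nk p).card : ℝ) * Rmin = ∑ _q ∈ Nk p, Rmin := by
            rw [Finset.sum_const, nsmul_eq_mul]
        _ ≤ ∑ q ∈ Nk p, reach p q :=
            Finset.sum_le_sum fun q hq => (hbound p hp q (hsub p hp hq)).1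
    have hsumhi : ∑ q ∈ Nk p, reach p q ≤ ((Nk p).card : ℝ) * Rmax := by
      calc ∑ q ∈ Nk p, reach p q ≤ ∑ _q ∈ Nk p, Rmax :=
            Finset.sum_le_sum fun q hq => (hbound p hp q (hsub p hp hq)).2
        _ = ((Nk p).card : ℝ) * Rmax := by rw [Finset.sum_const, nsmul_eq_mul]
    have hsumpos : 0 < ∑ q ∈ Nk p, reach p q :=
      lt_of_lt_of_le (by positivity) hsumlo
    rw [hlrd p]
    constructor
    · rw [div_le_div_iff₀ hRmax hsumpos]
      linarith [hsumhi]
    · rw [div_le_div_iff₀ hsumpos hRmin]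
      linarith [hsumlo]
  have hlrdpos : ∀ p ∈ B, 0 < lrd p := fun p hp =>
    lt_of_lt_of_le (by positivity) (hlrdb p hp).1
  have h1ε : 1 + ε = Rmax / Rmin := by rw [hε]; ring
  have hinvε : 1 / (1 + ε) = Rmin / Rmax := by
    rw [h1ε]; field_simp
  have hcard : (0:ℝ) < ((Nk c).card : ℝ) := by
    exact_mod_cast Finset.card_pos.mpr (hnonempty c hc)
  have hratio : ∀ q ∈ Nk c, Rmin / Rmax ≤ lrd q / lrd c ∧ lrd q / lrd c ≤ Rmax / Rmin := by
    intro q hq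
    have hqB := hsub c hc hq
    have h1 := hlrdb q hqB
    have h2 := hlrdb c hc
    have hcpos := hlrdpos c hc
    have hqpos := hlrdpos q hqB
    constructor
    · have : Rmin / Rmax = (1/Rmax)/(1/Rmin) := by
        field_simp
      rw [this]
      exact div_le_div₀ hqpos.le h1.1 (by positivity) h2.2
    · have : Rmax / Rmin = (1/Rmin)/(1/Rmax) := by
        field_simp
      rw [this]
      exact div_le_div₀ (by positivity) h1.2 (by positivity) h2.1
  rw [hLOF c, hinvε, h1ε, one_div ((Nk c).card : ℝ), inv_mul_eq_div]
  have hSlo : ((Nk c).card : ℝ) * (Rmin / Rmax) ≤ ∑ q ∈ Nk c, lrd q / lrd c := by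
    calc ((Nk c).card : ℝ) * (Rmin / Rmax) = ∑ _q ∈ Nk c, Rmin / Rmax := by
          rw [Finset.sum_const, nsmul_eq_mul]
      _ ≤ _ := Finset.sum_le_sum fun q hq => (hratio q hq).1
  have hShi : ∑ q ∈ Nk c, lrd q / lrd c ≤ ((Nk c).card : ℝ) * (Rmax / Rmin) := by
    calc ∑ q ∈ Nk c, lrd q / lrd c ≤ ∑ _q ∈ Nk c, Rmax / Rmin :=
          Finset.sum_le_sum fun q hq => (hratio q hq).2
      _ = _ := by rw [Finset.sum_const, nsmul_eq_mul]
  constructor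
  · rw [le_div_iff₀ hcard]
    linarith [hSlo]
  · rw [div_le_iff₀ hcard]
    linarith [hShi]
end

section
/- For any point c, let r^c_max and r^c_min be the maximum and minimum reachability distances between c and its k-nearest neighbors, and let r^N_max and r^N_min be the maximum and minimum reachability distances between neighbors of c and their own k-nearest neighbors (all assumed positive). Then r^c_min / r^N_max ≤ LOF_k(c) ≤ r^c_max / r^N_min. -/
/-- General LOF bounds: if the reachability distances between `c` and its
`k`-nearest neighbors lie in `[rcmin, rcmax]` and those between the neighbors
of `c` and their own `k`-nearest neighbors lie in `[rNmin, rNmax]` (all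
positive), then `rcmin / rNmax ≤ LOF_k(c) ≤ rcmax / rNmin`. -/
theorem lof_general_bounds {D : Type*} [MetricSpace D] [Fintype D]
    (kdist : D → ℝ) (Nk : D → Finset D)
    (reach : D → D → ℝ)
    (hreach : ∀ p q, reach p q = max (kdist q) (dist p q))
    (lrd : D → ℝ)
    (hlrd : ∀ p, lrd p = ((Nk p).card : ℝ) / (∑ q ∈ Nk p, reach p q))
    (LOF : D → ℝ)
    (hLOF : ∀ p, LOF p = (1 / ((Nk p).card : ℝ)) * ∑ q ∈ Nk p, lrd q / lrd p)
    (c : D) (hne : (Nk c).Nonempty)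
    (hneN : ∀ q ∈ Nk c, (Nk q).Nonempty)
    (rcmin rcmax rNmin rNmax : ℝ)
    (hrcmin : 0 < rcmin) (hrNmin : 0 < rNmin)
    (hrc : ∀ q ∈ Nk c, rcmin ≤ reach c q ∧ reach c q ≤ rcmax)
    (hrN : ∀ q ∈ Nk c, ∀ q' ∈ Nk q, rNmin ≤ reach q q' ∧ reach q q' ≤ rNmax) :
    rcmin / rNmax ≤ LOF c ∧ LOF c ≤ rcmax / rNmin := by
  have hrcmax : 0 < rcmax := by
    obtain ⟨q, hq⟩ := hne
    exact lt_of_lt_of_le hrcmin (le_trans (hrc q hq).1 (hrc q hq).2)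
  have hrNmax : 0 < rNmax := by
    obtain ⟨q, hq⟩ := hne
    obtain ⟨q', hq'⟩ := hneN q hq
    exact lt_of_lt_of_le hrNmin (le_trans (hrN q hq q' hq').1 (hrN q hq q' hq').2)
  have lrdb : ∀ (p : D) (a b : ℝ), 0 < a → (Nk p).Nonempty →
      (∀ q ∈ Nk p, a ≤ reach p q ∧ reach p q ≤ b) →
      1 / b ≤ lrd p ∧ lrd p ≤ 1 / a := by
    intro p a b ha hp hb
    have hb0 : 0 < b := by
      obtain ⟨q, hq⟩ := hp
      exact lt_of_lt_of_le ha (le_trans (hb q hq).1 (hb q hq).2)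
    have hn : (0:ℝ) < ((Nk p).card : ℝ) := by
      exact_mod_cast Finset.card_pos.mpr hp
    have hS1 : ((Nk p).card : ℝ) * a ≤ ∑ q ∈ Nk p, reach p q := by
      calc ((Nk p).card : ℝ) * a = ∑ _q ∈ Nk p, a := by
            rw [Finset.sum_const, nsmul_eq_mul]
        _ ≤ ∑ q ∈ Nk p, reach p q := Finset.sum_le_sum fun q hq => (hb q hq).1
    have hS2 : ∑ q ∈ Nk p, reach p q ≤ ((Nk p).card : ℝ) * b := by
      calc ∑ q ∈ Nk p, reach p q ≤ ∑ _q ∈ Nk p, b :=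
            Finset.sum_le_sum fun q hq => (hb q hq).2
        _ = ((Nk p).card : ℝ) * b := by rw [Finset.sum_const, nsmul_eq_mul]
    have hS0 : 0 < ∑ q ∈ Nk p, reach p q := lt_of_lt_of_le (by positivity) hS1
    rw [hlrd p]
    constructor
    · rw [div_le_div_iff₀ hb0 hS0]; nlinarith
    · rw [div_le_div_iff₀ hS0 ha]; nlinarith
  have hc := lrdb c rcmin rcmax hrcmin hne hrc
  have hlc0 : 0 < lrd c := lt_of_lt_of_le (by positivity) hc.1
  have hterm : ∀ q ∈ Nk c, rcmin / rNmax ≤ lrd q / lrd c ∧ lrd q / lrd c ≤ rcmax / rNmin := by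
    intro q hq
    have hqb := lrdb q rNmin rNmax hrNmin (hneN q hq) (hrN q hq)
    have hlq0 : 0 < lrd q := lt_of_lt_of_le (by positivity) hqb.1
    have h1 : 1 / rNmax ≤ lrd q := hqb.1
    have h2 : lrd q ≤ 1 / rNmin := hqb.2
    have h3 : 1 / rcmax ≤ lrd c := hc.1
    have h4 : lrd c ≤ 1 / rcmin := hc.2
    have e1 : rcmin * lrd c ≤ 1 := by
      rw [le_div_iff₀ hrcmin] at h4; linarith [mul_comm rcmin (lrd c)]
    have e2 : 1 ≤ rNmax * lrd q := by
      rw [div_le_iff₀ hrNmax] at h1; linarith [mul_comm rNmax (lrd q)]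
    have e3 : rNmin * lrd q ≤ 1 := by
      rw [le_div_iff₀ hrNmin] at h2; linarith [mul_comm rNmin (lrd q)]
    have e4 : 1 ≤ rcmax * lrd c := by
      rw [div_le_iff₀ hrcmax] at h3; linarith [mul_comm rcmax (lrd c)]
    constructor
    · rw [div_le_div_iff₀ hrNmax hlc0]; nlinarith
    · rw [div_le_div_iff₀ hlc0 hrNmin]; nlinarith
  have hn : (0:ℝ) < ((Nk c).card : ℝ) := by
    exact_mod_cast Finset.card_pos.mpr hne
  rw [hLOF c]
  constructor
  · have : ((Nk c).card : ℝ) * (rcmin / rNmax) ≤ ∑ q ∈ Nk c, lrd q / lrd c := by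
      calc ((Nk c).card : ℝ) * (rcmin / rNmax) = ∑ _q ∈ Nk c, rcmin / rNmax := by
            rw [Finset.sum_const, nsmul_eq_mul]
        _ ≤ _ := Finset.sum_le_sum fun q hq => (hterm q hq).1
    calc rcmin / rNmax = (1 / ((Nk c).card : ℝ)) * (((Nk c).card : ℝ) * (rcmin / rNmax)) := by
          field_simp
      _ ≤ _ := by
          apply mul_le_mul_of_nonneg_left this (by positivity)
  · have : ∑ q ∈ Nk c, lrd q / lrd c ≤ ((Nk c).card : ℝ) * (rcmax / rNmin) := by
      calc ∑ q ∈ Nk c, lrd q / lrd c ≤ ∑ _q ∈ Nk c, rcmax / rNmin :=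
            Finset.sum_le_sum fun q hq => (hterm q hq).2
        _ = ((Nk c).card : ℝ) * (rcmax / rNmin) := by rw [Finset.sum_const, nsmul_eq_mul]
    calc (1 / ((Nk c).card : ℝ)) * ∑ q ∈ Nk c, lrd q / lrd c
          ≤ (1 / ((Nk c).card : ℝ)) * (((Nk c).card : ℝ) * (rcmax / rNmin)) :=
            mul_le_mul_of_nonneg_left this (by positivity)
      _ = rcmax / rNmin := by field_simp
end
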